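/- For each fixed t in the open interval (-1,1) and each integer m ≥ 2, the normalized Gegenbauer polynomials satisfy lim_{k→∞} R_k^m(t) = 0, where R_k^m = P_k^m / P_k^m(1). -/

import Mathlib

set_option maxHeartbeats 1000000


open scoped RealInnerProductSpace BigOperators

/-- Gegenbauer polynomial `P_k^m` of degree `k` with parameter `(m-1)/2`,
defined by the standard three-term recurrence. -/
noncomputable def Geg (m : ℕ) : ℕ → ℝ → ℝ
  | 0 => fun _ => 1
  | 1 => fun t => ((m : ℝ) - 1) * t
  | n + 2 => fun t =>
      ((2 * (n : ℝ) + m + 1) * t * Geg m (n + 1) t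
        - ((n : ℝ) + m - 1) * Geg m n t) / ((n : ℝ) + 2)

lemma Geg_ratio (m : ℕ) : ∀ k : ℕ, ((k:ℝ)+1) * Geg m (k+1) 1 = ((k:ℝ) + m - 1) * Geg m k 1 := by
  intro k
  induction k with
  | zero => simp [Geg]
  | succ n ih =>
    have h : Geg m (n+2) 1
        = ((2 * (n : ℝ) + m + 1) * 1 * Geg m (n + 1) 1
          - ((n : ℝ) + m - 1) * Geg m n 1) / ((n : ℝ) + 2) := rfl
    have hn : ((n:ℝ) + 2) ≠ 0 := by positivity
    push_cast
    rw [h]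
    field_simp
    linear_combination ((n:ℝ)+2) * ih

lemma Geg_one_pos (m : ℕ) (hm : 2 ≤ m) : ∀ k, 0 < Geg m k 1 := by
  intro k
  induction k with
  | zero => norm_num [Geg]
  | succ n ih =>
    have h := Geg_ratio m n
    have hm' : (2:ℝ) ≤ m := by exact_mod_cast hm
    have h1 : (0:ℝ) < (n:ℝ)+1 := by positivity
    have h2 : (0:ℝ) < (n:ℝ)+m-1 := by
      have := Nat.cast_nonneg (α := ℝ) n
      linarith
    nlinarith

lemma r_rec (m : ℕ) (hm : 2 ≤ m) (t : ℝ) (k : ℕ) :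
    Geg m (k+2) t / Geg m (k+2) 1 =
      (2 - ((m:ℝ)-1)/((k:ℝ)+m)) * t * (Geg m (k+1) t / Geg m (k+1) 1)
        - (1 - ((m:ℝ)-1)/((k:ℝ)+m)) * (Geg m k t / Geg m k 1) := by
  have hm' : (2:ℝ) ≤ m := by exact_mod_cast hm
  have hk0 : (0:ℝ) ≤ k := Nat.cast_nonneg k
  have q0 := Geg_one_pos m hm k
  have q1 := Geg_one_pos m hm (k+1)
  have q2 := Geg_one_pos m hm (k+2)
  have hr1 := Geg_ratio m k
  have hr2 := Geg_ratio m (k+1)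
  push_cast at hr2
  have hP : Geg m (k+2) t
      = ((2 * (k : ℝ) + m + 1) * t * Geg m (k + 1) t
        - ((k : ℝ) + m - 1) * Geg m k t) / ((k : ℝ) + 2) := rfl
  have hk2 : ((k:ℝ)+2) ≠ 0 := by positivity
  have hkm : ((k:ℝ)+m) ≠ 0 := by positivity
  have hkm1 : ((k:ℝ)+m-1) ≠ 0 := by nlinarith
  have hq2 : Geg m (k+2) 1 = ((k:ℝ)+m) * Geg m (k+1) 1 / ((k:ℝ)+2) := by
    field_simp
    linarith [hr2]
  have hq0 : Geg m k 1 = ((k:ℝ)+1) * Geg m (k+1) 1 / ((k:ℝ)+m-1) := by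
    field_simp
    linarith [hr1]
  rw [hP, hq2, hq0]
  field_simp
  ring

theorem normalized_gegenbauer_tendsto_zero (m : ℕ) (hm : 2 ≤ m)
    (t : ℝ) (ht : t ∈ Set.Ioo (-1 : ℝ) 1) :
    Filter.Tendsto (fun k : ℕ => Geg m k t / Geg m k 1) Filter.atTop (nhds 0) := by
  obtain ⟨ht1, ht2⟩ := ht
  have habs : |t| < 1 := abs_lt.mpr ⟨ht1, ht2⟩
  have ht2' : t^2 < 1 := by nlinarith
  have hm' : (2:ℝ) ≤ m := by exact_mod_cast hm
  set r : ℕ → ℝ := fun k => Geg m k t / Geg m k 1 with hrdef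
  set ε : ℕ → ℝ := fun k => ((m:ℝ)-1)/((k:ℝ)+m) with hεdef
  set c : ℕ → ℝ := fun k => ε k * (2 - ε k) with hcdef
  set d : ℕ → ℝ := fun k => t * r (k+1) - r k with hddef
  set u : ℕ → ℝ := fun k => r k ^2 - 2*t*r k*r (k+1) + r (k+1)^2 with hudef
  have hkm_pos : ∀ k : ℕ, (0:ℝ) < (k:ℝ) + m := fun k => by
    have := Nat.cast_nonneg (α := ℝ) k; linarith
  have hε_pos : ∀ k, 0 < ε k := fun k => div_pos (by linarith) (hkm_pos k)
  have hε_lt1 : ∀ k, ε k < 1 := fun k => by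
    rw [hεdef]
    simp only
    rw [div_lt_one (hkm_pos k)]
    have := Nat.cast_nonneg (α := ℝ) k; linarith
  have hε_mono : ∀ k, ε (k+1) ≤ ε k := fun k => by
    simp only [hεdef]
    push_cast
    rw [div_le_div_iff₀ (by linarith [hkm_pos k]) (hkm_pos k)]
    have := Nat.cast_nonneg (α := ℝ) k
    nlinarith
  have hrec : ∀ k, r (k+2) = (2 - ε k)*t*r (k+1) - (1 - ε k)*r k := fun k => r_rec m hm t k
  have hc_pos : ∀ k, 0 < c k := fun k => mul_pos (hε_pos k) (by linarith [hε_lt1 k])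
  have hc_mono : ∀ k, c (k+1) ≤ c k := fun k => by
    simp only [hcdef]
    nlinarith [hε_mono k, hε_lt1 k, hε_lt1 (k+1), hε_pos (k+1), hε_pos k]
  have hclow : ∀ k : ℕ, 1/(2*(m:ℝ)*((k:ℝ)+1)) ≤ c (k+1) := fun k => by
    have h1 : ε (k+1) ≤ c (k+1) := by
      simp only [hcdef]
      nlinarith [hε_pos (k+1), hε_lt1 (k+1)]
    have h2 : 1/(2*(m:ℝ)*((k:ℝ)+1)) ≤ ε (k+1) := by
      simp only [hεdef]
      push_cast
      rw [div_le_div_iff₀ (by positivity) (by linarith [hkm_pos k])]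
      have hk0 := Nat.cast_nonneg (α := ℝ) k
      have hm2 : (0:ℝ) ≤ (m:ℝ) - 2 := by linarith
      nlinarith [mul_nonneg hm2 hk0, mul_nonneg (mul_nonneg hm2 hm2) hk0, sq_nonneg ((m:ℝ)-2)]
    linarith
  have hu_step : ∀ k, u (k+1) = u k - c k * d k^2 := fun k => by
    have h := hrec k
    show r (k+1) ^2 - 2*t*r (k+1)*r (k+2) + r (k+2)^2
        = (r k ^2 - 2*t*r k*r (k+1) + r (k+1)^2) - (ε k * (2 - ε k)) * (t * r (k+1) - r k)^2
    rw [h]; ring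
  have hu_lb : ∀ k, (1 - |t|) * (r k^2 + r (k+1)^2) ≤ u k := fun k => by
    simp only [hudef]
    nlinarith [mul_nonneg (sub_nonneg.mpr (le_abs_self t)) (sq_nonneg (r k + r (k+1))),
      mul_nonneg (sub_nonneg.mpr (neg_abs_le t)) (sq_nonneg (r k - r (k+1)))]
  have hu_nonneg : ∀ k, 0 ≤ u k := fun k => by
    have := hu_lb k
    nlinarith [sq_nonneg (r k), sq_nonneg (r (k+1))]
  have hu_anti : Antitone u := antitone_nat_of_succ_le (fun k => by
    have := hu_step k
    nlinarith [hc_pos k, sq_nonneg (d k)])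
  have hbdd : BddBelow (Set.range u) := ⟨0, by rintro x ⟨k, rfl⟩; exact hu_nonneg k⟩
  have hLtend : Filter.Tendsto u Filter.atTop (nhds (⨅ i, u i)) :=
    tendsto_atTop_ciInf hu_anti hbdd
  set L := ⨅ i, u i with hLdef
  have hL0 : 0 ≤ L := le_ciInf hu_nonneg
  have hLle : ∀ k, L ≤ u k := fun k => ciInf_le hbdd k
  have hsum : ∀ N, ∑ k ∈ Finset.range N, c k * d k^2 = u 0 - u N := by
    intro N
    induction N with
    | zero => simp
    | succ n ih =>
      rw [Finset.sum_range_succ, ih, hu_step n]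
      ring
  have hsum_le : ∀ N, ∑ k ∈ Finset.range N, c k * d k^2 ≤ u 0 := fun N => by
    have := hsum N
    have := hu_nonneg N
    linarith
  set B := Real.sqrt (u 0 / (1 - |t|)) with hBdef
  have hB0 : 0 ≤ B := Real.sqrt_nonneg _
  have hB : ∀ k, |r k| ≤ B := fun k => by
    rw [hBdef, ← Real.sqrt_sq_eq_abs]
    apply Real.sqrt_le_sqrt
    rw [le_div_iff₀ (by linarith)]
    have h1 := hu_lb k
    have h2 := hu_anti (Nat.zero_le k)
    nlinarith [sq_nonneg (r (k+1))]
  have hB' : ∀ k, |r k| ≤ Real.sqrt (u k / (1 - |t|)) := fun k => by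
    rw [← Real.sqrt_sq_eq_abs]
    apply Real.sqrt_le_sqrt
    rw [le_div_iff₀ (by linarith)]
    have h1 := hu_lb k
    nlinarith [sq_nonneg (r (k+1))]
  have hLz : L = 0 := by
    by_contra hne
    have hLpos : 0 < L := lt_of_le_of_ne hL0 (Ne.symm hne)
    have h1t2 : 0 < 1 - t^2 := by linarith
    set δ := min 1 (L * (1 - t^2) / (4 + 4*B)) with hδdef
    have hδpos : 0 < δ := lt_min one_pos (by positivity)
    have hδ1 : δ ≤ 1 := min_le_left _ _
    have hδ2 : (2 + 2*B) * δ ≤ L*(1-t^2)/2 := by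
      have h := min_le_right 1 (L * (1 - t^2) / (4 + 4*B))
      have heq : (2+2*B) * (L*(1-t^2)/(4+4*B)) = L*(1-t^2)/2 := by
        field_simp
        ring
      calc (2+2*B)*δ ≤ (2+2*B) * (L*(1-t^2)/(4+4*B)) := by
            apply mul_le_mul_of_nonneg_left _ (by linarith)
            rw [hδdef]; exact h
        _ = L*(1-t^2)/2 := heq
    have hkey : ∀ k, δ^2 ≤ d k^2 + d (k+1)^2 := by
      intro k
      by_contra hlt
      push_neg at hlt
      have hdk : |d k| < δ :=
        abs_lt_of_sq_lt_sq (by linarith [sq_nonneg (d (k+1))]) hδpos.le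
      have hdk1 : |d (k+1)| < δ :=
        abs_lt_of_sq_lt_sq (by linarith [sq_nonneg (d k)]) hδpos.le
      have hrk : |r (k+2)| ≤ B := hB (k+2)
      have e_eq : t * r (k+1) - r (k+2) = -((1 - ε k) * d k) := by
        rw [hrec k]
        simp only [hddef]
        ring
      have he : |t * r (k+1) - r (k+2)| ≤ |d k| := by
        rw [e_eq, abs_neg, abs_mul]
        have h1 : |1 - ε k| ≤ 1 := by
          rw [abs_of_nonneg (by linarith [hε_lt1 k])]
          linarith [hε_pos k]
        nlinarith [abs_nonneg (d k)]
      have hesq : (t * r (k+1) - r (k+2))^2 < δ^2 := by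
        have h1 : |t * r (k+1) - r (k+2)| < δ := lt_of_le_of_lt he hdk
        have h2 := abs_lt.mp h1
        exact sq_lt_sq' h2.1 h2.2
      have hid : u (k+1) * (1 - t^2)
          = (t*r (k+1) - r (k+2))^2 + (1 - 2*t^2) * d (k+1)^2
            - 2*t*(1-t^2)*r (k+2)*d (k+1) := by
        show (r (k+1) ^2 - 2*t*r (k+1)*r (k+2) + r (k+2)^2) * (1 - t^2)
            = (t*r (k+1) - r (k+2))^2 + (1 - 2*t^2) * (t * r (k+2) - r (k+1))^2
              - 2*t*(1-t^2)*r (k+2)*(t * r (k+2) - r (k+1))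
        ring
      have hcross : -(2*t*(1-t^2)*r (k+2)*d (k+1)) ≤ 2*B*δ := by
        have habst : |t| ≤ 1 := habs.le
        have habs1 : |1 - t^2| ≤ 1 := by
          rw [abs_of_nonneg (by linarith)]
          nlinarith [sq_nonneg t]
        have hdk1' : |d (k+1)| ≤ δ := hdk1.le
        have habs2 : |2*t*(1-t^2)*r (k+2)*d (k+1)| ≤ 2*1*1*B*δ := by
          rw [abs_mul, abs_mul, abs_mul, abs_mul, abs_two]
          gcongr <;> assumption
        have := neg_abs_le (2*t*(1-t^2)*r (k+2)*d (k+1))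
        linarith
      have hDsq : d (k+1)^2 < δ^2 := by nlinarith [sq_nonneg (d k)]
      have hD2 : (1-2*t^2)*d (k+1)^2 ≤ δ^2 := by
        nlinarith [mul_nonneg (sq_nonneg t) (sq_nonneg (d (k+1))), sq_nonneg (d (k+1))]
      have hfin : L * (1-t^2) ≤ u (k+1) * (1-t^2) :=
        mul_le_mul_of_nonneg_right (hLle (k+1)) h1t2.le
      have hLt2pos : 0 < L * (1-t^2) := mul_pos hLpos h1t2
      have hδsq : δ^2 ≤ δ := by nlinarith
      linarith [hid, hesq, hcross]
    -- divergence contradiction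
    have hmpos : (0:ℝ) < m := by linarith
    have hbound : ∀ N, ∑ k ∈ Finset.range N, (δ^2/(2*(m:ℝ))) * (1/((k:ℝ)+1)) ≤ 2 * u 0 := by
      intro N
      have hstep : ∀ k ∈ Finset.range N,
          (δ^2/(2*(m:ℝ))) * (1/((k:ℝ)+1)) ≤ c k * d k^2 + c (k+1) * d (k+1)^2 := by
        intro k _
        have h1 : (δ^2/(2*(m:ℝ))) * (1/((k:ℝ)+1)) = δ^2 * (1/(2*(m:ℝ)*((k:ℝ)+1))) := by
          field_simp
        rw [h1]
        calc δ^2 * (1/(2*(m:ℝ)*((k:ℝ)+1)))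
            ≤ δ^2 * c (k+1) := mul_le_mul_of_nonneg_left (hclow k) (sq_nonneg δ)
          _ = c (k+1) * δ^2 := mul_comm _ _
          _ ≤ c (k+1) * (d k^2 + d (k+1)^2) :=
              mul_le_mul_of_nonneg_left (hkey k) (hc_pos (k+1)).le
          _ = c (k+1) * d k^2 + c (k+1) * d (k+1)^2 := mul_add _ _ _
          _ ≤ c k * d k^2 + c (k+1) * d (k+1)^2 :=
              add_le_add_left (mul_le_mul_of_nonneg_right (hc_mono k) (sq_nonneg _)) _
      have h5 := Finset.sum_le_sum hstep
      have h6 : ∑ k ∈ Finset.range N, (c k * d k^2 + c (k+1) * d (k+1)^2)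
          = (∑ k ∈ Finset.range N, c k * d k^2) + ∑ k ∈ Finset.range N, c (k+1) * d (k+1)^2 :=
        Finset.sum_add_distrib
      have h7 := Finset.sum_range_succ' (fun k => c k * d k^2) N
      have h8 := hsum_le N
      have h9 := hsum_le (N+1)
      have h10 : 0 ≤ c 0 * d 0^2 := mul_nonneg (hc_pos 0).le (sq_nonneg _)
      calc ∑ k ∈ Finset.range N, (δ^2/(2*(m:ℝ))) * (1/((k:ℝ)+1))
          ≤ ∑ k ∈ Finset.range N, (c k * d k^2 + c (k+1) * d (k+1)^2) := h5
        _ ≤ 2 * u 0 := by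
            rw [h6]
            have : ∑ k ∈ Finset.range N, c (k+1) * d (k+1)^2 ≤ u 0 := by
              have := h7
              linarith
            linarith
    have hpos : 0 < δ^2/(2*(m:ℝ)) := by positivity
    have hdiv := Real.tendsto_sum_range_one_div_nat_succ_atTop
    obtain ⟨N, hN⟩ := (hdiv.eventually_gt_atTop ((2 * u 0)/(δ^2/(2*(m:ℝ))))).exists
    have hb := hbound N
    rw [← Finset.mul_sum] at hb
    rw [div_lt_iff₀ hpos] at hN
    push_cast at hN
    nlinarith
  -- conclusion
  have hu0 : Filter.Tendsto u Filter.atTop (nhds 0) := hLz ▸ hLtend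
  have h1abs : 0 < 1 - |t| := by linarith
  have hgtend : Filter.Tendsto (fun k => Real.sqrt (u k / (1 - |t|))) Filter.atTop (nhds 0) := by
    have h1 : Filter.Tendsto (fun k => u k / (1-|t|)) Filter.atTop (nhds 0) := by
      simpa using hu0.div_const (1-|t|)
    have h2 := h1.sqrt
    simpa using h2
  have hneg : Filter.Tendsto (fun k => -Real.sqrt (u k / (1 - |t|))) Filter.atTop (nhds 0) := by
    simpa using hgtend.neg
  apply tendsto_of_tendsto_of_tendsto_of_le_of_le hneg hgtend
  · intro k
    have h := hB' k
    linarith [(abs_le.mp h).1]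
  · intro k
    exact (abs_le.mp (hB' k)).2
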